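/- Let X ∈ ℝ^{n×p}, let k and m be positive integers with k ≤ m ≤ p − k, and let c₀ ≥ 1. Then γ(2k) ≥ κ(k, c₀, m). -/

import Mathlib

noncomputable section
open Classical

/-- The ℓ₀ "norm": number of nonzero entries. -/
def l0 {p : ℕ} (β : Fin p → ℝ) : ℕ := (Finset.univ.filter fun i => β i ≠ 0).card

/-- Euclidean norm of a vector. -/
def l2 {q : ℕ} (v : Fin q → ℝ) : ℝ := Real.sqrt (∑ i, (v i) ^ 2)

/-- ℓ₁-norm of the sub-vector of `θ` with coordinates in `J`. -/
def l1S {p : ℕ} (J : Finset (Fin p)) (θ : Fin p → ℝ) : ℝ := ∑ i ∈ J, |θ i|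

/-- Euclidean norm of the sub-vector of `θ` with coordinates in `J`. -/
def l2S {p : ℕ} (J : Finset (Fin p)) (θ : Fin p → ℝ) : ℝ := Real.sqrt (∑ i ∈ J, (θ i) ^ 2)

/-- `γ(k) = min{ ‖Xθ‖₂/‖θ‖₂ : θ ≠ 0, ‖θ‖₀ ≤ k }`. -/
def gammaX {n p : ℕ} (X : Matrix (Fin n) (Fin p) ℝ) (k : ℕ) : ℝ :=
  sInf {r : ℝ | ∃ θ : Fin p → ℝ, θ ≠ 0 ∧ l0 θ ≤ k ∧ r = l2 (X.mulVec θ) / l2 θ}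

/-- `κ(k, c₀, m)`: the minimum over index sets `J₀` with `|J₀| ≤ k` and over
`θ ≠ 0` satisfying `‖θ_{J₀ᶜ}‖₁ ≤ c₀‖θ_{J₀}‖₁` of `‖Xθ‖₂/‖θ_{J₀₁}‖₂`, where
`J₀₁ = J₀ ∪ J₁` and `J₁` consists of the `m` largest-in-magnitude coordinates of `θ`
outside `J₀`. -/
def kappaXm {n p : ℕ} (X : Matrix (Fin n) (Fin p) ℝ) (k : ℕ) (c0 : ℝ) (m : ℕ) : ℝ :=
  sInf {r : ℝ | ∃ (J0 J1 : Finset (Fin p)) (θ : Fin p → ℝ), J0.card ≤ k ∧ θ ≠ 0 ∧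
    l1S J0ᶜ θ ≤ c0 * l1S J0 θ ∧
    J1 ⊆ J0ᶜ ∧ J1.card = m ∧ (∀ i ∈ J1, ∀ j ∈ J0ᶜ \ J1, |θ j| ≤ |θ i|) ∧
    r = l2 (X.mulVec θ) / l2S (J0 ∪ J1) θ}

/-!
Given `θ ≠ 0` with at most `2k` nonzero entries, let `J₀` be the positions of its `k` largest
entries in magnitude. The at most `k` remaining nonzero entries are each dominated by every entry
on `J₀`, so `‖θ_{J₀ᶜ}‖₁ ≤ ‖θ_{J₀}‖₁ ≤ c₀‖θ_{J₀}‖₁`. Padding these remaining positions to a set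
`J₁ ⊆ J₀ᶜ` of size `m` gives an admissible pair for `κ` with `θ` supported on `J₀ ∪ J₁`, so
`‖θ_{J₀₁}‖₂ = ‖θ‖₂`. Hence every ratio in the set defining `γ(2k)` also appears in the set
defining `κ(k, c₀, m)`.
-/

open Finset

theorem exists_finset_card_eq_forall_notMem_le {α β : Type*} [Fintype α] [LinearOrder β]
    (f : α → β) {k : ℕ} (hk : k ≤ Fintype.card α) :
    ∃ s : Finset α, #s = k ∧ ∀ i ∈ s, ∀ j ∉ s, f j ≤ f i := by
  induction k with
  | zero => exact ⟨∅, rfl, by simp⟩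
  | succ k ih =>
    obtain ⟨s, hcard, hs⟩ := ih (by omega)
    have hne : sᶜ.Nonempty := by
      rw [← card_pos, card_compl, hcard]; omega
    obtain ⟨b, hb, hmax⟩ := exists_max_image sᶜ f hne
    have hbs : b ∉ s := mem_compl.mp hb
    refine ⟨insert b s, by rw [card_insert_of_notMem hbs, hcard], ?_⟩
    intro i hi j hj
    rw [mem_insert, not_or] at hj
    rcases mem_insert.mp hi with rfl | hi
    · exact hmax j (mem_compl.mpr hj.2)
    · exact hs i hi j hj.2

theorem Finset.sum_le_sum_of_card_le_of_forall_le {ι M : Type*} [AddCommMonoid M]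
    [LinearOrder M] [IsOrderedAddMonoid M] {s t : Finset ι} {f : ι → M}
    (hcard : #t ≤ #s) (hf : ∀ i ∈ s, 0 ≤ f i) (hle : ∀ i ∈ s, ∀ j ∈ t, f j ≤ f i) :
    ∑ j ∈ t, f j ≤ ∑ i ∈ s, f i := by
  rcases s.eq_empty_or_nonempty with rfl | hs
  · simp [card_eq_zero.mp (Nat.le_zero.mp hcard)]
  obtain ⟨b, hb, hmin⟩ := exists_min_image s f hs
  calc ∑ j ∈ t, f j ≤ #t • f b := sum_le_card_nsmul t f (f b) fun j hj => hle b hb j hj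
    _ ≤ #s • f b := nsmul_le_nsmul_left (hf b hb) hcard
    _ ≤ ∑ i ∈ s, f i := card_nsmul_le_sum s f (f b) hmin

section TopCoordinates

variable {p : ℕ} {θ : Fin p → ℝ} {J₀ : Finset (Fin p)}

theorem card_support_sdiff_le (htop : ∀ i ∈ J₀, ∀ j ∉ J₀, |θ j| ≤ |θ i|) :
    #(univ.filter (θ · ≠ 0) \ J₀) ≤ l0 θ - #J₀ := by
  rcases (univ.filter (θ · ≠ 0) \ J₀).eq_empty_or_nonempty with h | ⟨j, hj⟩
  · simp [h]
  obtain ⟨hθj, hjJ₀⟩ : θ j ≠ 0 ∧ j ∉ J₀ := by simpa using hj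
  have hJ₀ : J₀ ⊆ univ.filter (θ · ≠ 0) := fun i hi => by
    simpa using (abs_pos.mpr hθj).trans_le (htop i hi j hjJ₀)
  exact (card_sdiff_of_subset hJ₀).le

theorem l1S_compl_eq_sum_support_sdiff :
    l1S J₀ᶜ θ = ∑ j ∈ univ.filter (θ · ≠ 0) \ J₀, |θ j| := by
  exact (sum_subset (fun j hj => by simp_all) fun j hj hj' => by simp_all).symm

theorem l1S_compl_le_l1S (htop : ∀ i ∈ J₀, ∀ j ∉ J₀, |θ j| ≤ |θ i|) (hcard : l0 θ ≤ 2 * #J₀) :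
    l1S J₀ᶜ θ ≤ l1S J₀ θ := by
  rw [l1S_compl_eq_sum_support_sdiff]
  refine sum_le_sum_of_card_le_of_forall_le ?_ (fun _ _ => abs_nonneg _) fun i hi j hj => ?_
  · have := card_support_sdiff_le htop; omega
  · exact htop i hi j (mem_sdiff.mp hj).2

end TopCoordinates

theorem l2S_eq_l2_of_forall_notMem {p : ℕ} {θ : Fin p → ℝ} {J : Finset (Fin p)}
    (hθ : ∀ j ∉ J, θ j = 0) : l2S J θ = l2 θ := by
  rw [l2S, l2, sum_subset (subset_univ J) fun j _ hj => by simp [hθ j hj]]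

theorem exists_kappa_index_sets_of_l0_le {p k m : ℕ} (hkm : k ≤ m) (hmp : m ≤ p - k) {θ : Fin p → ℝ}
    (hθ : l0 θ ≤ 2 * k) :
    ∃ J₀ J₁ : Finset (Fin p), #J₀ ≤ k ∧ l1S J₀ᶜ θ ≤ l1S J₀ θ ∧ J₁ ⊆ J₀ᶜ ∧ #J₁ = m ∧
      (∀ i ∈ J₁, ∀ j ∈ J₀ᶜ \ J₁, |θ j| ≤ |θ i|) ∧ l2S (J₀ ∪ J₁) θ = l2 θ := by
  obtain ⟨J₀, hJ₀, htop⟩ :=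
    exists_finset_card_eq_forall_notMem_le (fun i => |θ i|) (k := k) (by rw [Fintype.card_fin]; omega)
  have hT : univ.filter (θ · ≠ 0) \ J₀ ⊆ J₀ᶜ := fun j hj => mem_compl.mpr (mem_sdiff.mp hj).2
  obtain ⟨J₁, hTJ₁, hJ₁, hJ₁card⟩ := exists_subsuperset_card_eq (n := m) hT
    (by have := card_support_sdiff_le htop; omega) (by rw [card_compl, hJ₀]; simpa)
  have hvanish : ∀ j ∉ J₀ ∪ J₁, θ j = 0 := fun j hj => by
    by_contra hθj
    exact hj (mem_union_right _ (hTJ₁ (by simp_all)))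
  refine ⟨J₀, J₁, hJ₀.le, l1S_compl_le_l1S htop (hJ₀ ▸ hθ), hJ₁, hJ₁card, ?_,
    l2S_eq_l2_of_forall_notMem hvanish⟩
  intro i _ j hj
  rw [hvanish j (by simp_all), abs_zero]
  exact abs_nonneg _

theorem l0_pi_single_one {p : ℕ} (i : Fin p) : l0 (Pi.single i (1 : ℝ)) = 1 := by
  rw [l0, card_eq_one]
  exact ⟨i, by ext j; by_cases h : j = i <;> simp [h]⟩

/-- For `1 ≤ k ≤ m ≤ p − k` and `c₀ ≥ 1`: `γ(2k) ≥ κ(k, c₀, m)`. -/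
theorem stmt3 {n p : ℕ} (X : Matrix (Fin n) (Fin p) ℝ)
    (k m : ℕ) (hk : 0 < k) (hkm : k ≤ m) (hmp : m ≤ p - k) (c0 : ℝ) (hc0 : 1 ≤ c0) :
    kappaXm X k c0 m ≤ gammaX X (2 * k) := by
  refine csInf_le_csInf ⟨0, ?_⟩ ⟨_, Pi.single ⟨0, by omega⟩ 1, ?_, ?_, rfl⟩ ?_
  · rintro _ ⟨_, _, _, -, -, -, -, -, -, rfl⟩
    exact div_nonneg (Real.sqrt_nonneg _) (Real.sqrt_nonneg _)
  · simp
  · rw [l0_pi_single_one]; omega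
  · rintro _ ⟨θ, hθ, hl0, rfl⟩
    obtain ⟨J₀, J₁, hJ₀, hcone, hJ₁, hJ₁card, htop, hl2⟩ := exists_kappa_index_sets_of_l0_le hkm hmp hl0
    have hnonneg : 0 ≤ l1S J₀ θ := sum_nonneg fun _ _ => abs_nonneg _
    exact ⟨J₀, J₁, θ, hJ₀, hθ, hcone.trans (le_mul_of_one_le_left hnonneg hc0), hJ₁, hJ₁card,
      htop, by rw [hl2]⟩
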